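/- Let M be a matroid on a finite linearly ordered set E, and let p, q be nonnegative integers. Then ∂^{p+q} t / ∂x^p ∂y^q (M; x, y) = p! q! Σ_A x^{ι_M(A)} y^{ε_M(A)}, where the sum is over all A ⊆ E with corank r(M) − r_M(A) = p and nullity |A| − r_M(A) = q. -/

import Mathlib

open Set

/-- `e` is the smallest element of `C`. -/
def SmallestIn {α : Type*} [LinearOrder α] (e : α) (C : Set α) : Prop :=
  e ∈ C ∧ ∀ f ∈ C, e ≤ f

/-- `C` is a circuit of `M`: a minimal dependent set. -/
def IsCircuit {α : Type*} (M : Matroid α) (C : Set α) : Prop :=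
  ¬ M.Indep C ∧ ∀ x ∈ C, M.Indep (C \ {x})

/-- A cocircuit is a circuit of the dual matroid. -/
def IsCocircuit {α : Type*} (M : Matroid α) (C : Set α) : Prop :=
  IsCircuit M✶ C

/-- `P_M(A)`: elements outside `A` that are smallest in some cocircuit avoiding `A`. -/
def Pset {α : Type*} [LinearOrder α] (M : Matroid α) (A : Set α) : Set α :=
  {e | e ∉ A ∧ ∃ C, IsCocircuit M C ∧ C ⊆ Aᶜ ∧ SmallestIn e C}

/-- `Q_M(A)`: elements of `A` that are smallest in some circuit contained in `A`. -/
def Qset {α : Type*} [LinearOrder α] (M : Matroid α) (A : Set α) : Set α :=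
  {e | e ∈ A ∧ ∃ C, IsCircuit M C ∧ C ⊆ A ∧ SmallestIn e C}

/-- Externally active elements of `A`. -/
def ExtSet {α : Type*} [LinearOrder α] (M : Matroid α) (A : Set α) : Set α :=
  {e | e ∉ A ∧ ∃ C, IsCircuit M C ∧ C ⊆ A ∪ {e} ∧ SmallestIn e C}

/-- Internally active elements of `A`. -/
def IntSet {α : Type*} [LinearOrder α] (M : Matroid α) (A : Set α) : Set α :=
  {e | e ∈ A ∧ ∃ C, IsCocircuit M C ∧ C ⊆ Aᶜ ∪ {e} ∧ SmallestIn e C}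

/-- The rank of a set: the largest cardinality of an independent subset. -/
noncomputable def rk {α : Type*} (M : Matroid α) (A : Set α) : ℕ :=
  sSup (Set.ncard '' {I | I ⊆ A ∧ M.Indep I})

/-- Matroid perspective (strong-map / quotient condition, form (MP3)). -/
def Perspective {α : Type*} (M M' : Matroid α) : Prop :=
  ∀ C D : Set α, IsCircuit M C → IsCocircuit M' D → (C ∩ D).ncard ≠ 1

/-- Rank codrop of a subset in a matroid perspective. -/
noncomputable def rcd {α : Type*} (M M' : Matroid α) (A : Set α) : ℕ :=
  ((rk M Set.univ : ℤ) - rk M' Set.univ - ((rk M A : ℤ) - rk M' A)).toNat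

open MvPolynomial in
/-- The Tutte polynomial of a matroid, in variables `X 0 = x` and `X 1 = y`. -/
noncomputable def tutte {α : Type*} [Fintype α] (M : Matroid α) : MvPolynomial (Fin 2) ℤ :=
  ∑ A ∈ (Finset.univ : Finset α).powerset,
    (X 0 - 1) ^ (rk M Set.univ - rk M (A : Set α)) *
      (X 1 - 1) ^ (A.card - rk M (A : Set α))

/-!
Crapo's interval partition: every `A ⊆ E` lies in the interval `[B \ Int(B), B ∪ Ext(B)]` of
exactly one base `B`. The base is built greedily from `A` (a basis of `A` scanned from the top,
extended outside `A` from the bottom), and it is unique because an internally active element of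
`B` never lies in the fundamental circuit of an externally active one. Writing `A = (B \ S) ∪ T`
with `S ⊆ Int(B)` and `T ⊆ Ext(B)`, the corank of `A` is `|S|`, its nullity `|T|`, and its
internal and external activities are `|Int(B)| - |S|` and `|Ext(B)| - |T|`.

Summing over intervals gives Crapo's formula `t(M) = Σ_B x^|Int(B)| y^|Ext(B)|`, so
`∂ₓ^p ∂ᵧ^q t = Σ_B p! q! C(|Int(B)|, p) C(|Ext(B)|, q) x^(|Int(B)| - p) y^(|Ext(B)| - q)`;
and the sets `A` of the interval of `B` with corank `p` and nullity `q` are exactly the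
`C(|Int(B)|, p) C(|Ext(B)|, q)` choices of `|S| = p`, `|T| = q`, each contributing the monomial
`x^(|Int(B)| - p) y^(|Ext(B)| - q)`.
-/

section Activity

variable {α : Type*} {M : Matroid α} {A C : Set α} {e : α}

lemma isCircuit_iff_matroid_isCircuit (hE : M.E = univ) : IsCircuit M C ↔ M.IsCircuit C := by
  rw [Matroid.isCircuit_iff_dep_forall_sdiff_singleton_indep, Matroid.Dep, hE,
    and_iff_left (subset_univ C)]
  rfl

lemma isCocircuit_iff_matroid_isCocircuit (hE : M.E = univ) : IsCocircuit M C ↔ M.IsCocircuit C :=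
  isCircuit_iff_matroid_isCircuit (M := M✶) (by rw [Matroid.dual_ground, hE])

variable [LinearOrder α]

lemma intSet_eq_extSet_dual (M : Matroid α) (A : Set α) : IntSet M A = ExtSet M✶ Aᶜ := by
  ext e
  simp only [IntSet, ExtSet, IsCocircuit, mem_ofPred_eq, mem_compl_iff, not_not, union_singleton]

lemma mem_extSet_iff (hE : M.E = univ) :
    e ∈ ExtSet M A ↔ e ∉ A ∧ e ∈ M.closure (A ∩ Ioi e) := by
  constructor
  · rintro ⟨heA, C, hC, hCA, heC, hmin⟩
    refine ⟨heA, ?_⟩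
    rw [isCircuit_iff_matroid_isCircuit hE] at hC
    have hCe : C \ {e} ⊆ A ∩ Ioi e := fun x ⟨hxC, hxe⟩ ↦
      ⟨(hCA hxC).resolve_right hxe, lt_of_le_of_ne (hmin x hxC) (Ne.symm hxe)⟩
    exact M.closure_subset_closure hCe (hC.mem_closure_sdiff_singleton_of_mem heC)
  · rintro ⟨heA, hcl⟩
    refine ⟨heA, ?_⟩
    obtain ⟨C, hCs, hC, heC⟩ := Matroid.exists_isCircuit_of_mem_closure hcl (fun h ↦ heA h.1)
    refine ⟨C, (isCircuit_iff_matroid_isCircuit hE).2 hC, fun x hx ↦ ?_, heC, fun x hx ↦ ?_⟩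
    · rcases hCs hx with rfl | hx
      exacts [Or.inr rfl, Or.inl hx.1]
    · rcases hCs hx with rfl | hx
      exacts [le_rfl, hx.2.le]

end Activity

section Bases

variable {α : Type*} {M : Matroid α} {B : Set α} {e x : α}

lemma Matroid.IsBase.mem_fundCircuit_iff_notMem_closure (hB : M.IsBase B) (hx : x ∈ M.E \ B)
    (he : e ∈ B) : e ∈ M.fundCircuit x B ↔ x ∉ M.closure (B \ {e}) := by
  have hxe : x ≠ e := fun h ↦ hx.2 (h ▸ he)
  rw [hB.indep.mem_fundCircuit_iff (by rw [hB.closure_eq]; exact hx.1) hx.2,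
    ← insert_sdiff_singleton_comm hxe, (hB.indep.sdiff _).insert_indep_iff_of_notMem
    (fun h ↦ hx.2 h.1), mem_sdiff, and_iff_right hx.1]

lemma Matroid.IsBase.mem_closure_of_fundCircuit_sdiff_subset {X : Set α} (hB : M.IsBase B)
    (hx : x ∈ M.E \ B) (hX : M.fundCircuit x B \ {x} ⊆ X) : x ∈ M.closure X :=
  M.closure_subset_closure hX <|
    (hB.fundCircuit_isCircuit hx.1 hx.2).mem_closure_sdiff_singleton_of_mem (M.mem_fundCircuit x B)

variable [LinearOrder α]

lemma mem_intSet_iff_of_isBase (hE : M.E = univ) (hB : M.IsBase B) (he : e ∈ B) :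
    e ∈ IntSet M B ↔ ∀ x ∉ B, x < e → x ∈ M.closure (B \ {e}) := by
  have hmem : ∀ x ∉ B, x ∈ M.E \ B := fun x hx ↦ ⟨hE ▸ mem_univ x, hx⟩
  constructor
  · -- otherwise the fundamental circuit of `x` would meet the cocircuit `D` only in `e`
    rintro ⟨-, D, hD, hDB, heD, hmin⟩ x hxB hxe
    by_contra hcl
    have hC := hB.fundCircuit_isCircuit (hmem x hxB).1 hxB
    have heC := (hB.mem_fundCircuit_iff_notMem_closure (hmem x hxB) he).2 hcl
    refine hC.inter_isCocircuit_ne_singleton ((isCocircuit_iff_matroid_isCocircuit hE).1 hD)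
      (Subset.antisymm (fun y ⟨hyC, hyD⟩ ↦ ?_) (singleton_subset_iff.2 ⟨heC, heD⟩))
    rcases M.fundCircuit_subset_insert x B hyC with rfl | hyB
    · exact absurd (hmin y hyD) (not_le.2 hxe)
    · exact (hDB hyD).resolve_left (not_not.2 hyB)
  · intro h
    refine ⟨he, M.fundCocircuit e B,
      (isCocircuit_iff_matroid_isCocircuit hE).2 (Matroid.fundCocircuit_isCocircuit he hB),
      fun y hy ↦ ?_, M.mem_fundCocircuit e B, fun x hx ↦ ?_⟩
    · rcases M.fundCocircuit_subset_insert_compl e B hy with rfl | hy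
      exacts [Or.inr rfl, Or.inl hy.2]
    · rcases M.fundCocircuit_subset_insert_compl e B hx with rfl | hxB
      · exact le_rfl
      refine le_of_not_gt fun hxe ↦ ?_
      have heC := hB.mem_fundCocircuit_iff_mem_fundCircuit.1 hx
      exact (hB.mem_fundCircuit_iff_notMem_closure hxB he).1 heC (h x hxB.2 hxe)

lemma mem_closure_sdiff_of_mem_extSet_of_mem_intSet (hE : M.E = univ) (hB : M.IsBase B)
    (hx : x ∈ ExtSet M B) (he : e ∈ IntSet M B) : x ∈ M.closure (B \ {e}) := by
  obtain ⟨hxB, hcl⟩ := (mem_extSet_iff hE).1 hx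
  rcases lt_or_gt_of_ne (ne_of_mem_of_not_mem he.1 hxB).symm with hxe | hex
  · exact (mem_intSet_iff_of_isBase hE hB he.1).1 he x hxB hxe
  · have hsub : B ∩ Ioi x ⊆ B \ {e} := fun y hy ↦ ⟨hy.1, (hex.trans hy.2).ne'⟩
    exact M.closure_subset_closure hsub hcl

lemma fundCircuit_subset_of_mem_extSet (hE : M.E = univ) (hx : x ∈ ExtSet M B) :
    M.fundCircuit x B ⊆ insert x (B ∩ Ioi x) := by
  obtain ⟨-, hcl⟩ := (mem_extSet_iff hE).1 hx
  rw [Matroid.fundCircuit_eq_sInter (M.closure_subset_closure inter_subset_left hcl)]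
  exact insert_subset_insert (sInter_subset_of_mem ⟨inter_subset_left, hcl⟩)

end Bases

section Interval

variable {α : Type*} [LinearOrder α] {M : Matroid α} {A B : Set α} {e : α}

/-- `A` lies in Crapo's interval `[B \ Int(B), B ∪ Ext(B)]` of the base `B`. -/
structure InBaseInterval (M : Matroid α) (B A : Set α) : Prop where
  isBase : M.IsBase B
  sdiff_subset_intSet : B \ A ⊆ IntSet M B
  sdiff_subset_extSet : A \ B ⊆ ExtSet M B

namespace InBaseInterval

lemma mem_closure_of_mem_extSet (hE : M.E = univ) (h : InBaseInterval M B A)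
    (he : e ∈ ExtSet M B) : e ∈ M.closure (A ∩ B ∩ Ioi e) := by
  have heB : e ∈ M.E \ B := ⟨hE ▸ mem_univ e, he.1⟩
  refine h.isBase.mem_closure_of_fundCircuit_sdiff_subset heB ?_
  rintro x ⟨hxC, hxe⟩
  obtain ⟨hxB, hex⟩ := (fundCircuit_subset_of_mem_extSet hE he hxC).resolve_left hxe
  refine ⟨⟨by_contra fun hxA ↦ ?_, hxB⟩, hex⟩
  have hcl := mem_closure_sdiff_of_mem_extSet_of_mem_intSet hE h.isBase he
    (h.sdiff_subset_intSet ⟨hxB, hxA⟩)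
  exact (h.isBase.mem_fundCircuit_iff_notMem_closure heB hxB).1 hxC hcl

lemma closure_inter_Ioi (hE : M.E = univ) (h : InBaseInterval M B A) (e : α) :
    M.closure (A ∩ Ioi e) = M.closure (A ∩ B ∩ Ioi e) := by
  refine (M.closure_subset_closure_of_subset_closure ?_).antisymm
    (M.closure_subset_closure (inter_subset_inter_left _ inter_subset_left))
  rintro x ⟨hxA, hex⟩
  by_cases hxB : x ∈ B
  · exact M.mem_closure_of_mem' ⟨⟨hxA, hxB⟩, hex⟩ (hE ▸ mem_univ x)
  · exact M.closure_subset_closure (inter_subset_inter_right _ (Ioi_subset_Ioi hex.le))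
      (h.mem_closure_of_mem_extSet hE (h.sdiff_subset_extSet ⟨hxA, hxB⟩))

lemma isBasis_inter (hE : M.E = univ) (h : InBaseInterval M B A) : M.IsBasis (A ∩ B) A := by
  refine Matroid.isBasis_iff_indep_subset_closure.2
    ⟨h.isBase.indep.subset inter_subset_right, inter_subset_left, fun x hxA ↦ ?_⟩
  by_cases hxB : x ∈ B
  · exact M.mem_closure_of_mem' ⟨hxA, hxB⟩ (hE ▸ mem_univ x)
  · exact M.closure_subset_closure inter_subset_left
      (h.mem_closure_of_mem_extSet hE (h.sdiff_subset_extSet ⟨hxA, hxB⟩))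

lemma extSet_eq (hE : M.E = univ) (h : InBaseInterval M B A) :
    ExtSet M A = ExtSet M B \ (A \ B) := by
  ext e
  rw [mem_sdiff, mem_extSet_iff hE, h.closure_inter_Ioi hE]
  constructor
  · rintro ⟨heA, hcl⟩
    have heB : e ∉ B := fun heB ↦ h.isBase.indep.notMem_closure_sdiff_of_mem heB
      (M.closure_subset_closure (show A ∩ B ∩ Ioi e ⊆ B \ {e} from
        fun x hx ↦ ⟨hx.1.2, hx.2.ne'⟩) hcl)
    exact ⟨(mem_extSet_iff hE).2 ⟨heB, M.closure_subset_closure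
      (inter_subset_inter_left _ inter_subset_right) hcl⟩, fun h' ↦ heA h'.1⟩
  · rintro ⟨he, heAB⟩
    exact ⟨fun heA ↦ heAB ⟨heA, he.1⟩, h.mem_closure_of_mem_extSet hE he⟩

lemma dual (hE : M.E = univ) (h : InBaseInterval M B A) : InBaseInterval M✶ Bᶜ Aᶜ where
  isBase := by simpa [hE, compl_eq_univ_sdiff] using h.isBase.compl_isBase_dual
  sdiff_subset_intSet := by
    rw [compl_sdiff_compl, intSet_eq_extSet_dual, Matroid.dual_dual, compl_compl]
    exact h.sdiff_subset_extSet
  sdiff_subset_extSet := by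
    rw [compl_sdiff_compl, ← intSet_eq_extSet_dual]
    exact h.sdiff_subset_intSet

lemma intSet_eq (hE : M.E = univ) (h : InBaseInterval M B A) :
    IntSet M A = IntSet M B \ (B \ A) := by
  rw [intSet_eq_extSet_dual, (h.dual hE).extSet_eq (by rw [Matroid.dual_ground, hE]),
    ← intSet_eq_extSet_dual, compl_sdiff_compl]

lemma sdiff_union {S T : Set α} (hB : M.IsBase B) (hS : S ⊆ IntSet M B)
    (hT : T ⊆ ExtSet M B) : InBaseInterval M B (B \ S ∪ T) where
  isBase := hB
  sdiff_subset_intSet _ hx := hS (by_contra fun hxS ↦ hx.2 (Or.inl ⟨hx.1, hxS⟩))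
  sdiff_subset_extSet _ hx := hT (hx.1.resolve_left fun h ↦ hx.2 h.1)

end InBaseInterval

end Interval

section Greedy

variable {α : Type*} [LinearOrder α] {M : Matroid α} {A B : Set α}

def greedyBasis (M : Matroid α) (A : Set α) : Set α :=
  {a | a ∈ A ∧ a ∉ M.closure (A ∩ Ioi a)}

def greedyExtension (M : Matroid α) (A : Set α) : Set α :=
  {a | a ∉ A ∧ a ∉ M.closure (A ∪ Iio a)}

/-- The base whose interval contains `A`. -/
def greedyBase (M : Matroid α) (A : Set α) : Set α :=
  greedyBasis M A ∪ greedyExtension M A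

namespace InBaseInterval

lemma greedyBasis_eq (hE : M.E = univ) (h : InBaseInterval M B A) :
    greedyBasis M A = A ∩ B := by
  ext a
  refine and_congr_right fun haA ↦ ?_
  rw [h.closure_inter_Ioi hE]
  refine ⟨fun hcl ↦ by_contra fun haB ↦ hcl ?_, fun haB hcl ↦ ?_⟩
  · exact h.mem_closure_of_mem_extSet hE (h.sdiff_subset_extSet ⟨haA, haB⟩)
  · exact h.isBase.indep.notMem_closure_sdiff_of_mem haB (M.closure_subset_closure
      (show A ∩ B ∩ Ioi a ⊆ B \ {a} from fun x hx ↦ ⟨hx.1.2, hx.2.ne'⟩) hcl)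

lemma greedyExtension_eq (hE : M.E = univ) (h : InBaseInterval M B A) :
    greedyExtension M A = B \ A := by
  ext e
  refine ⟨fun ⟨heA, hcl⟩ ↦ ⟨by_contra fun heB ↦ hcl ?_, heA⟩,
    fun ⟨heB, heA⟩ ↦ ⟨heA, fun hcl ↦ ?_⟩⟩
  · refine h.isBase.mem_closure_of_fundCircuit_sdiff_subset ⟨hE ▸ mem_univ e, heB⟩ ?_
    rintro x ⟨hxC, hxe⟩
    have hxB : x ∈ B := (M.fundCircuit_subset_insert e B hxC).resolve_left hxe
    by_cases hxA : x ∈ A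
    · exact Or.inl hxA
    refine Or.inr (lt_of_le_of_ne (le_of_not_gt fun hex ↦ ?_) hxe)
    have hecl := (mem_intSet_iff_of_isBase hE h.isBase hxB).1
      (h.sdiff_subset_intSet ⟨hxB, hxA⟩) e heB hex
    exact (h.isBase.mem_fundCircuit_iff_notMem_closure ⟨hE ▸ mem_univ e, heB⟩ hxB).1 hxC hecl
  · have heI := h.sdiff_subset_intSet ⟨heB, heA⟩
    refine h.isBase.indep.notMem_closure_sdiff_of_mem heB
      (M.closure_subset_closure_of_subset_closure (fun x hx ↦ ?_) hcl)
    by_cases hxB : x ∈ B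
    · have hxe : x ≠ e := by
        rintro rfl
        exact hx.elim heA (lt_irrefl x)
      exact M.mem_closure_of_mem' ⟨hxB, hxe⟩ (hE ▸ mem_univ x)
    rcases hx with hxA | hxe
    · exact mem_closure_sdiff_of_mem_extSet_of_mem_intSet hE h.isBase
        (h.sdiff_subset_extSet ⟨hxA, hxB⟩) heI
    · exact (mem_intSet_iff_of_isBase hE h.isBase heB).1 heI x hxB hxe

lemma greedyBase_eq (hE : M.E = univ) (h : InBaseInterval M B A) : greedyBase M A = B := by
  rw [greedyBase, h.greedyBasis_eq hE, h.greedyExtension_eq hE, inter_comm, inter_union_sdiff]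

end InBaseInterval

variable [Finite α]

lemma mem_closure_greedyBasis_inter_Ici (hE : M.E = univ) {a : α} (ha : a ∈ A) :
    a ∈ M.closure (greedyBasis M A ∩ Ici a) := by
  induction a using WellFoundedGT.induction with
  | _ a ih =>
  by_cases haG : a ∈ greedyBasis M A
  · exact M.mem_closure_of_mem' ⟨haG, le_rfl⟩ (hE ▸ mem_univ a)
  have hcl : a ∈ M.closure (A ∩ Ioi a) := by_contra fun h ↦ haG ⟨ha, h⟩
  refine M.closure_subset_closure_of_subset_closure ?_ hcl
  rintro b ⟨hbA, hab⟩
  exact M.closure_subset_closure (inter_subset_inter_right _ (Ici_subset_Ici.2 hab.le))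
    (ih b hab hbA)

lemma greedyBasis_indep (hE : M.E = univ) : M.Indep (greedyBasis M A) := by
  by_contra hdep
  obtain ⟨C, hCG, hC⟩ := Matroid.Dep.exists_isCircuit_subset ⟨hdep, hE ▸ subset_univ _⟩
  obtain ⟨e, heC, hmin⟩ := exists_min_image C id C.toFinite hC.nonempty
  refine (hCG heC).2 (M.closure_subset_closure ?_ (hC.mem_closure_sdiff_singleton_of_mem heC))
  rintro x ⟨hxC, hxe⟩
  exact ⟨(hCG hxC).1, lt_of_le_of_ne (hmin x hxC) (Ne.symm hxe)⟩

lemma mem_closure_union_greedyExtension_inter_Iic (hE : M.E = univ) (a : α) :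
    a ∈ M.closure (A ∪ (greedyExtension M A ∩ Iic a)) := by
  induction a using WellFoundedLT.induction with
  | _ a ih =>
  by_cases haA : a ∈ A
  · exact M.mem_closure_of_mem' (Or.inl haA) (hE ▸ mem_univ a)
  by_cases haJ : a ∈ greedyExtension M A
  · exact M.mem_closure_of_mem' (Or.inr ⟨haJ, le_rfl⟩) (hE ▸ mem_univ a)
  have hcl : a ∈ M.closure (A ∪ Iio a) := by_contra fun h ↦ haJ ⟨haA, h⟩
  refine M.closure_subset_closure_of_subset_closure ?_ hcl
  rintro b (hbA | hba)
  · exact M.mem_closure_of_mem' (Or.inl hbA) (hE ▸ mem_univ b)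
  · exact M.closure_subset_closure
      (union_subset_union_right _ (inter_subset_inter_right _ (Iic_subset_Iic.2 hba.le)))
      (ih b hba)

lemma greedyBase_isBase (hE : M.E = univ) : M.IsBase (greedyBase M A) := by
  refine Matroid.Indep.isBase_of_ground_subset_closure (by_contra fun hdep ↦ ?_) ?_
  · obtain ⟨C, hCB, hC⟩ := Matroid.Dep.exists_isCircuit_subset ⟨hdep, hE ▸ subset_univ _⟩
    by_cases hCJ : (C ∩ greedyExtension M A).Nonempty
    · obtain ⟨e, ⟨heC, heJ⟩, hmax⟩ := exists_max_image _ id (toFinite _) hCJ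
      refine heJ.2 (M.closure_subset_closure ?_ (hC.mem_closure_sdiff_singleton_of_mem heC))
      rintro x ⟨hxC, hxe⟩
      rcases hCB hxC with hxG | hxJ
      · exact Or.inl hxG.1
      · exact Or.inr (lt_of_le_of_ne (hmax x ⟨hxC, hxJ⟩) hxe)
    · refine hC.not_indep ((greedyBasis_indep (A := A) hE).subset fun x hx ↦ ?_)
      exact (hCB hx).resolve_right fun hxJ ↦ hCJ ⟨x, hx, hxJ⟩
  · have hA : A ⊆ M.closure (greedyBase M A) := fun a ha ↦ M.closure_subset_closure
      (inter_subset_left.trans subset_union_left) (mem_closure_greedyBasis_inter_Ici hE ha)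
    have hJ : greedyExtension M A ⊆ M.closure (greedyBase M A) := fun x hx ↦
      M.mem_closure_of_mem' (Or.inr hx) (hE ▸ mem_univ x)
    rw [hE]
    exact fun a _ ↦ M.closure_subset_closure_of_subset_closure
      (union_subset hA (inter_subset_left.trans hJ))
      (mem_closure_union_greedyExtension_inter_Iic hE a)

lemma inBaseInterval_greedyBase (hE : M.E = univ) : InBaseInterval M (greedyBase M A) A where
  isBase := greedyBase_isBase hE
  sdiff_subset_extSet := by
    rintro e ⟨heA, heB⟩
    have hcl : e ∈ M.closure (A ∩ Ioi e) := by_contra fun h ↦ heB (Or.inl ⟨heA, h⟩)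
    refine (mem_extSet_iff hE).2 ⟨heB, M.closure_subset_closure_of_subset_closure ?_ hcl⟩
    rintro b ⟨hbA, heb⟩
    refine M.closure_subset_closure ?_ (mem_closure_greedyBasis_inter_Ici hE hbA)
    exact fun x ⟨hxG, hbx⟩ ↦ ⟨Or.inl hxG, heb.trans_le hbx⟩
  sdiff_subset_intSet := by
    rintro e ⟨heB, heA⟩
    refine (mem_intSet_iff_of_isBase hE (greedyBase_isBase hE) heB).2 fun x _ hxe ↦ ?_
    refine M.closure_subset_closure_of_subset_closure ?_
      (mem_closure_union_greedyExtension_inter_Iic (A := A) hE x)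
    rintro y (hyA | ⟨hyJ, hyx⟩)
    · refine M.closure_subset_closure ?_ (mem_closure_greedyBasis_inter_Ici hE hyA)
      exact fun z ⟨hzG, _⟩ ↦ ⟨Or.inl hzG, fun hze ↦ heA (hze ▸ hzG.1)⟩
    · exact M.mem_closure_of_mem' ⟨Or.inr hyJ, (hyx.trans_lt hxe).ne⟩ (hE ▸ mem_univ y)

end Greedy

section Rank

variable {α : Type*} [Finite α] {M : Matroid α} {B I X : Set α}

lemma rk_eq_ncard_of_isBasis (hI : M.IsBasis I X) : rk M X = I.ncard := by
  refine IsGreatest.csSup_eq ⟨⟨I, ⟨hI.subset, hI.indep⟩, rfl⟩, ?_⟩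
  rintro _ ⟨J, ⟨hJX, hJ⟩, rfl⟩
  obtain ⟨J', hJ', hJJ'⟩ := hJ.subset_isBasis_of_subset hJX hI.subset_ground
  calc J.ncard ≤ J'.ncard := ncard_le_ncard hJJ'
    _ = I.ncard := by rw [ncard_def, ncard_def, hJ'.encard_eq_encard hI]

lemma rk_univ_eq_ncard (hE : M.E = univ) (hB : M.IsBase B) : rk M univ = B.ncard :=
  rk_eq_ncard_of_isBasis (hE ▸ hB.isBasis_ground)

end Rank

section Partition

variable {α : Type*} [Fintype α] {M : Matroid α} {A B : Finset α}

open Classical in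
noncomputable def basesFinset (M : Matroid α) : Finset (Finset α) :=
  Finset.univ.filter fun B ↦ M.IsBase B

lemma mem_basesFinset : B ∈ basesFinset M ↔ M.IsBase B := by
  simp [basesFinset]

variable [LinearOrder α]

namespace InBaseInterval

lemma rk_univ_sub_rk_eq (hE : M.E = univ) (h : InBaseInterval M B A) :
    rk M univ - rk M A = (B \ A).card := by
  rw [rk_univ_eq_ncard hE h.isBase, rk_eq_ncard_of_isBasis (h.isBasis_inter hE),
    ← Finset.coe_inter, ncard_coe_finset, ncard_coe_finset, Finset.card_sdiff]

lemma card_sub_rk_eq (hE : M.E = univ) (h : InBaseInterval M B A) :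
    A.card - rk M A = (A \ B).card := by
  rw [rk_eq_ncard_of_isBasis (h.isBasis_inter hE), ← Finset.coe_inter, ncard_coe_finset,
    Finset.card_sdiff, Finset.inter_comm]

lemma ncard_intSet_eq (hE : M.E = univ) (h : InBaseInterval M B A) :
    (IntSet M A).ncard = (IntSet M B).ncard - (B \ A).card := by
  rw [h.intSet_eq hE, ncard_sdiff h.sdiff_subset_intSet, ← Finset.coe_sdiff, ncard_coe_finset]

lemma ncard_extSet_eq (hE : M.E = univ) (h : InBaseInterval M B A) :
    (ExtSet M A).ncard = (ExtSet M B).ncard - (A \ B).card := by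
  rw [h.extSet_eq hE, ncard_sdiff h.sdiff_subset_extSet, ← Finset.coe_sdiff, ncard_coe_finset]

end InBaseInterval

noncomputable def intFinset (M : Matroid α) (B : Finset α) : Finset α :=
  (IntSet M B).toFinite.toFinset

noncomputable def extFinset (M : Matroid α) (B : Finset α) : Finset α :=
  (ExtSet M B).toFinite.toFinset

noncomputable def greedyBaseFinset (M : Matroid α) (A : Finset α) : Finset α :=
  (greedyBase M A).toFinite.toFinset

@[simp] lemma coe_intFinset : (intFinset M B : Set α) = IntSet M B := Finite.coe_toFinset _

@[simp] lemma coe_extFinset : (extFinset M B : Set α) = ExtSet M B := Finite.coe_toFinset _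

lemma greedyBaseFinset_eq_iff (hE : M.E = univ) :
    greedyBaseFinset M A = B ↔ InBaseInterval M B A := by
  rw [← Finset.coe_inj, greedyBaseFinset, Finite.coe_toFinset]
  exact ⟨fun h ↦ h ▸ inBaseInterval_greedyBase hE, fun h ↦ h.greedyBase_eq hE⟩

lemma greedyBaseFinset_mem_basesFinset (hE : M.E = univ) (A : Finset α) :
    greedyBaseFinset M A ∈ basesFinset M :=
  mem_basesFinset.2 ((greedyBaseFinset_eq_iff hE).1 rfl).isBase

theorem sum_powerset_univ_eq_sum_basesFinset (hE : M.E = univ) {R : Type*} [AddCommMonoid R]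
    (F : ℕ → ℕ → ℕ → ℕ → R) :
    ∑ A ∈ (Finset.univ : Finset α).powerset,
        F (rk M univ - rk M (A : Set α)) (A.card - rk M (A : Set α))
          (IntSet M (A : Set α)).ncard (ExtSet M (A : Set α)).ncard =
      ∑ B ∈ basesFinset M, ∑ S ∈ (intFinset M B).powerset, ∑ T ∈ (extFinset M B).powerset,
        F S.card T.card ((intFinset M B).card - S.card) ((extFinset M B).card - T.card) := by
  rw [← Finset.sum_fiberwise_of_maps_to fun A _ ↦ greedyBaseFinset_mem_basesFinset hE A]
  refine Finset.sum_congr rfl fun B hB ↦ ?_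
  rw [← Finset.sum_product']
  have hST : ∀ ST ∈ (intFinset M B).powerset ×ˢ (extFinset M B).powerset,
      (ST.1 : Set α) ⊆ IntSet M B ∧ (ST.2 : Set α) ⊆ ExtSet M B := fun ST hST ↦ by
    simp only [Finset.mem_product, Finset.mem_powerset, ← Finset.coe_subset, coe_intFinset,
      coe_extFinset] at hST
    exact hST
  refine Finset.sum_nbij' (fun A ↦ (B \ A, A \ B)) (fun ST ↦ B \ ST.1 ∪ ST.2) ?_ ?_ ?_ ?_ ?_
  · intro A hA
    have h := (greedyBaseFinset_eq_iff hE).1 (Finset.mem_filter.1 hA).2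
    simp only [Finset.mem_product, Finset.mem_powerset, ← Finset.coe_subset, Finset.coe_sdiff,
      coe_intFinset, coe_extFinset]
    exact ⟨h.sdiff_subset_intSet, h.sdiff_subset_extSet⟩
  · intro ST hST'
    refine Finset.mem_filter.2 ⟨Finset.mem_powerset.2 (Finset.subset_univ _),
      (greedyBaseFinset_eq_iff hE).2 ?_⟩
    push_cast
    exact .sdiff_union (mem_basesFinset.1 hB) (hST ST hST').1 (hST ST hST').2
  · intro A _
    rw [Finset.sdiff_sdiff_self_left, Finset.inter_comm, Finset.union_comm,
      Finset.sdiff_union_inter]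
  · rintro ⟨S, T⟩ hST'
    have hSB : ∀ x ∈ S, x ∈ B := fun x hx ↦ ((hST _ hST').1 hx).1
    have hTB : ∀ x ∈ T, x ∉ B := fun x hx ↦ ((hST _ hST').2 hx).1
    ext x <;> simp only [Finset.mem_sdiff, Finset.mem_union] <;> grind
  · intro A hA
    have h := (greedyBaseFinset_eq_iff hE).1 (Finset.mem_filter.1 hA).2
    rw [h.rk_univ_sub_rk_eq hE, h.card_sub_rk_eq hE, h.ncard_intSet_eq hE,
      h.ncard_extSet_eq hE, ← coe_intFinset, ← coe_extFinset, ncard_coe_finset, ncard_coe_finset]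

end Partition

section Polynomial

open MvPolynomial

variable {σ R : Type*} [CommRing R]

lemma iterate_pderiv_eq_pow (i : σ) (n : ℕ) :
    (⇑(pderiv i : Derivation R (MvPolynomial σ R) (MvPolynomial σ R)))^[n] =
      ⇑((pderiv i : Derivation R (MvPolynomial σ R) (MvPolynomial σ R)).toLinearMap ^ n) := by
  rw [Module.End.coe_pow, Derivation.coeFn_coe]

lemma iterate_pderiv_sum {ι : Type*} (i : σ) (n : ℕ) (s : Finset ι)
    (f : ι → MvPolynomial σ R) :
    (⇑(pderiv i))^[n] (∑ b ∈ s, f b) = ∑ b ∈ s, (⇑(pderiv i))^[n] (f b) := by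
  rw [iterate_pderiv_eq_pow, map_sum]

lemma iterate_pderiv_X_pow_mul (i : σ) (a n : ℕ) {g : MvPolynomial σ R} (hg : pderiv i g = 0) :
    (⇑(pderiv i))^[n] (X i ^ a * g) = a.descFactorial n • (X i ^ (a - n) * g) := by
  induction n with
  | zero => simp
  | succ n ih =>
    rw [Function.iterate_succ_apply', ih, map_nsmul, pderiv_mul, pderiv_pow, pderiv_X_self, hg,
      Nat.descFactorial_succ, mul_comm (a - n), mul_nsmul, Nat.sub_sub, mul_zero, add_zero,
      mul_one, ← nsmul_eq_mul, smul_mul_assoc, smul_comm]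

lemma iterate_pderiv_zero_iterate_pderiv_one_X_pow_mul_X_pow (a b p q : ℕ) :
    (⇑(pderiv (0 : Fin 2)))^[p] ((⇑(pderiv (1 : Fin 2)))^[q]
      (X 0 ^ a * X 1 ^ b : MvPolynomial (Fin 2) R)) =
      (a.descFactorial p * b.descFactorial q) • (X 0 ^ (a - p) * X 1 ^ (b - q)) := by
  rw [mul_comm, iterate_pderiv_X_pow_mul 1 b q (g := X 0 ^ a) (by simp),
    mul_comm, iterate_pderiv_eq_pow, map_nsmul, ← iterate_pderiv_eq_pow,
    iterate_pderiv_X_pow_mul 0 a p (g := X 1 ^ (b - q)) (by simp), smul_smul,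
    mul_comm]

end Polynomial

lemma sum_powerset_sum_powerset_ite_card {β M : Type*} [AddCommMonoid M]
    (s t : Finset β) (p q : ℕ) (f : ℕ → ℕ → M) :
    ∑ S ∈ s.powerset, ∑ T ∈ t.powerset, (if S.card = p ∧ T.card = q then f S.card T.card else 0) =
      (s.card.choose p * t.card.choose q) • f p q := by
  rw [← Finset.sum_product', ← Finset.sum_filter,
    Finset.filter_product (fun S : Finset β ↦ S.card = p) (fun T : Finset β ↦ T.card = q),
    ← Finset.powersetCard_eq_filter, ← Finset.powersetCard_eq_filter,
    Finset.sum_congr rfl fun ST hST ↦ ?_, Finset.sum_const, Finset.card_product,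
    Finset.card_powersetCard, Finset.card_powersetCard]
  obtain ⟨hS, hT⟩ := Finset.mem_product.1 hST
  rw [(Finset.mem_powersetCard.1 hS).2, (Finset.mem_powersetCard.1 hT).2]

section Tutte

open MvPolynomial

variable {α : Type*} [Fintype α] [LinearOrder α] {M : Matroid α}

theorem tutte_eq_sum_basesFinset (hE : M.E = univ) :
    tutte M = ∑ B ∈ basesFinset M, X 0 ^ (intFinset M B).card * X 1 ^ (extFinset M B).card := by
  refine (sum_powerset_univ_eq_sum_basesFinset hE fun a b _ _ ↦
    (X 0 - 1) ^ a * (X 1 - 1) ^ b).trans (Finset.sum_congr rfl fun B _ ↦ ?_)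
  have hsum (s : Finset α) (x : MvPolynomial (Fin 2) ℤ) :
      ∑ t ∈ s.powerset, x ^ t.card = (x + 1) ^ s.card := by
    simpa using Finset.sum_pow_mul_eq_add_pow x 1 s
  rw [← Finset.sum_mul_sum, hsum, hsum, sub_add_cancel, sub_add_cancel]

theorem sum_activity_monomials_eq_sum_basesFinset {R : Type*} [CommSemiring R] (hE : M.E = univ)
    (p q : ℕ) :
    ∑ A ∈ (Finset.univ : Finset α).powerset.filter
        (fun A : Finset α ↦ rk M univ - rk M (A : Set α) = p ∧ A.card - rk M (A : Set α) = q),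
      (X 0 ^ (IntSet M (A : Set α)).ncard * X 1 ^ (ExtSet M (A : Set α)).ncard :
        MvPolynomial (Fin 2) R) =
    ∑ B ∈ basesFinset M, ((intFinset M B).card.choose p * (extFinset M B).card.choose q) •
      (X 0 ^ ((intFinset M B).card - p) * X 1 ^ ((extFinset M B).card - q)) := by
  rw [Finset.sum_filter]
  refine (sum_powerset_univ_eq_sum_basesFinset hE fun a b c d ↦
    if a = p ∧ b = q then (X 0 ^ c * X 1 ^ d : MvPolynomial (Fin 2) R) else 0).trans
    (Finset.sum_congr rfl fun B _ ↦ ?_)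
  exact sum_powerset_sum_powerset_ite_card _ _ p q
    fun a b ↦ X 0 ^ ((intFinset M B).card - a) * X 1 ^ ((extFinset M B).card - b)

end Tutte

open MvPolynomial in
theorem tutte_partial_derivative {α : Type*} [Fintype α] [LinearOrder α]
    (M : Matroid α) (hE : M.E = Set.univ) (p q : ℕ) :
    (⇑(pderiv (0 : Fin 2)))^[p] ((⇑(pderiv (1 : Fin 2)))^[q] (tutte M)) =
      (p.factorial * q.factorial : ℤ) •
        ∑ A ∈ Finset.univ.powerset.filter
            (fun A : Finset α =>
              rk M Set.univ - rk M (A : Set α) = p ∧ A.card - rk M (A : Set α) = q),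
          X 0 ^ (IntSet M (A : Set α)).ncard * X 1 ^ (ExtSet M (A : Set α)).ncard := by
  rw [tutte_eq_sum_basesFinset hE, sum_activity_monomials_eq_sum_basesFinset hE, Finset.smul_sum,
    iterate_pderiv_sum, iterate_pderiv_sum]
  refine Finset.sum_congr rfl fun B _ ↦ ?_
  rw [iterate_pderiv_zero_iterate_pderiv_one_X_pow_mul_X_pow,
    Nat.descFactorial_eq_factorial_mul_choose, Nat.descFactorial_eq_factorial_mul_choose,
    ← Nat.cast_smul_eq_nsmul ℤ,
    ← Nat.cast_smul_eq_nsmul ℤ, smul_smul]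
  congr 1
  push_cast
  ring
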